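/- arXiv:2104.14680 — 9 statements merged into one kernel-verified Lean document; each statement's English description precedes it below -/
import Mathlib

section
/- Let s_i and s_j be two closed disks in the plane with equal radius r, both centered on the x-axis, with centers c_i and c_j. Let p be a point with y(p) ≥ 0 such that p ∉ s_i, p ∈ s_j, and x(c_i) ≤ x(p). Then every point q with y(q) ≥ 0, q ∈ s_i, and x(q) ≥ x(p) satisfies q ∈ s_j. -/
/-- Two equal-radius closed Euclidean disks centered on the x-axis: if a point `p`
(on or above the x-axis) is outside `s_i`, inside `s_j`, and to the right of the
center of `s_i`, then every point `q` on or above the axis that is inside `s_i`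
and to the right of `p` is also inside `s_j`. -/
theorem unit_disk_domination (r : ℝ) (hr : 0 ≤ r) (ci cj p q : ℝ × ℝ)
    (hci : ci.2 = 0) (hcj : cj.2 = 0)
    (hpy : 0 ≤ p.2)
    (hpi : ¬ ((p.1 - ci.1) ^ 2 + (p.2 - ci.2) ^ 2 ≤ r ^ 2))
    (hpj : (p.1 - cj.1) ^ 2 + (p.2 - cj.2) ^ 2 ≤ r ^ 2)
    (hx : ci.1 ≤ p.1)
    (hqy : 0 ≤ q.2)
    (hqi : (q.1 - ci.1) ^ 2 + (q.2 - ci.2) ^ 2 ≤ r ^ 2)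
    (hqx : p.1 ≤ q.1) :
    (q.1 - cj.1) ^ 2 + (q.2 - cj.2) ^ 2 ≤ r ^ 2 := by
  push_neg at hpi
  rw [hci] at hpi hqi
  rw [hcj] at hpj ⊢
  set a := ci.1; set b := cj.1
  -- from p: (p1-a)^2 > (p1-b)^2, so (b-a)(2p1-a-b) > 0
  have key : (b - a) * (2 * p.1 - a - b) > 0 := by nlinarith [sq_nonneg (p.2 - 0)]
  have hab : a < b := by
    by_contra h
    push_neg at h
    nlinarith
  have h2 : a + b < 2 * q.1 := by nlinarith
  nlinarith [sq_nonneg (q.2 - 0)]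
end

section
/- Let s_i and s_j be two closed L1-balls (diamonds) in the plane, possibly of different radii, both centered on the x-axis, with centers c_i and c_j. Let p be a point with y(p) ≥ 0 such that p ∉ s_i, p ∈ s_j, and x(c_i) ≤ x(p). Then every point q with y(q) ≥ 0, q ∈ s_i, and x(q) ≥ x(p) satisfies q ∈ s_j. -/
/-- Two closed L1-balls (diamonds), possibly of different radii, centered on the
x-axis: if a point `p` (on or above the x-axis) is outside `s_i`, inside `s_j`,
and to the right of the center of `s_i`, then every point `q` on or above the
axis inside `s_i` with `x(q) ≥ x(p)` is also inside `s_j`. -/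
theorem l1_disk_domination (ri rj : ℝ) (hri : 0 ≤ ri) (hrj : 0 ≤ rj)
    (ci cj p q : ℝ × ℝ)
    (hci : ci.2 = 0) (hcj : cj.2 = 0)
    (hpy : 0 ≤ p.2)
    (hpi : ¬ (|p.1 - ci.1| + |p.2 - ci.2| ≤ ri))
    (hpj : |p.1 - cj.1| + |p.2 - cj.2| ≤ rj)
    (hx : ci.1 ≤ p.1)
    (hqy : 0 ≤ q.2)
    (hqi : |q.1 - ci.1| + |q.2 - ci.2| ≤ ri)
    (hqx : p.1 ≤ q.1) :
    |q.1 - cj.1| + |q.2 - cj.2| ≤ rj := by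
  simp only [hci, hcj, sub_zero] at *
  rw [abs_of_nonneg hpy] at hpj
  rw [abs_of_nonneg hqy] at hqi ⊢
  rw [abs_of_nonneg (by linarith : (0:ℝ) ≤ q.1 - ci.1)] at hqi
  push_neg at hpi
  rw [abs_of_nonneg (by linarith : (0:ℝ) ≤ p.1 - ci.1), abs_of_nonneg hpy] at hpi
  rcases abs_cases (p.1 - cj.1) with ⟨h1, h2⟩ | ⟨h1, h2⟩ <;>
    rcases abs_cases (q.1 - cj.1) with ⟨h3, h4⟩ | ⟨h3, h4⟩ <;> rw [h1] at hpj <;> rw [h3] <;> linarith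
end

section
/- Let s' be a closed disk in the plane centered at a point c' on the x-axis, and let a, b, p be points above the x-axis (y ≥ 0) with x(a) < x(b) < x(p), such that b ∈ s', a ∉ s', and p ∉ s'. Then any closed disk s centered on the x-axis that contains both a and p must also contain b. -/
/-- If `b ∈ s'` while `a, p ∉ s'` with `x(a) < x(b) < x(p)`, all three points on
or above the x-axis and `s'` a closed disk centered on the x-axis, then any
closed disk centered on the x-axis containing both `a` and `p` contains `b`. -/
theorem sandwiched_point_in_disk (r' : ℝ) (hr' : 0 ≤ r') (c' a b p : ℝ × ℝ)
    (hc' : c'.2 = 0)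
    (hay : 0 ≤ a.2) (hby : 0 ≤ b.2) (hpy : 0 ≤ p.2)
    (hab : a.1 < b.1) (hbp : b.1 < p.1)
    (hbin : (b.1 - c'.1) ^ 2 + (b.2 - c'.2) ^ 2 ≤ r' ^ 2)
    (haout : ¬ ((a.1 - c'.1) ^ 2 + (a.2 - c'.2) ^ 2 ≤ r' ^ 2))
    (hpout : ¬ ((p.1 - c'.1) ^ 2 + (p.2 - c'.2) ^ 2 ≤ r' ^ 2)) :
    ∀ (r : ℝ) (c : ℝ × ℝ), 0 ≤ r → c.2 = 0 →
      (a.1 - c.1) ^ 2 + (a.2 - c.2) ^ 2 ≤ r ^ 2 →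
      (p.1 - c.1) ^ 2 + (p.2 - c.2) ^ 2 ≤ r ^ 2 →
      (b.1 - c.1) ^ 2 + (b.2 - c.2) ^ 2 ≤ r ^ 2 := by
  intro r c hr hc hain hpin
  push_neg at haout hpout
  rw [hc'] at hbin haout hpout
  rw [hc] at hain hpin ⊢
  -- h(q) = (q.1-c.1)^2 - r^2 - (q.1-c'.1)^2 + r'^2, affine in q.1
  have ha : (a.1 - c.1) ^ 2 - r ^ 2 - (a.1 - c'.1) ^ 2 + r' ^ 2 < 0 := by nlinarith
  have hp : (p.1 - c.1) ^ 2 - r ^ 2 - (p.1 - c'.1) ^ 2 + r' ^ 2 < 0 := by nlinarith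
  have hb : (b.1 - c.1) ^ 2 - r ^ 2 - (b.1 - c'.1) ^ 2 + r' ^ 2 < 0 := by
    nlinarith [mul_neg_of_pos_of_neg (sub_pos.2 hab) hp, mul_neg_of_pos_of_neg (sub_pos.2 hbp) ha]
  nlinarith
end

section
/- Let s' be a closed disk centered at c' on the x-axis containing a point b with y(b) ≥ 0, and let a be a point with y(a) ≥ 0, x(a) < x(b), and a ∉ s'. Let q be the point on the x-axis equidistant from a and b. Then x(q) < x(c'). -/
/-- Let `s'` be a closed disk centered at `c'` on the x-axis containing `b`
(with `y(b) ≥ 0`), and let `a` be a point with `y(a) ≥ 0`, `x(a) < x(b)`,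
outside `s'`. If `q` is the point on the x-axis equidistant from `a` and `b`,
then `x(q) < x(c')`. -/
theorem bisector_left_of_center (r' : ℝ) (hr' : 0 ≤ r') (c' a b q : ℝ × ℝ)
    (hc' : c'.2 = 0)
    (hay : 0 ≤ a.2) (hby : 0 ≤ b.2)
    (hab : a.1 < b.1)
    (hbin : (b.1 - c'.1) ^ 2 + (b.2 - c'.2) ^ 2 ≤ r' ^ 2)
    (haout : ¬ ((a.1 - c'.1) ^ 2 + (a.2 - c'.2) ^ 2 ≤ r' ^ 2))
    (hq : q.2 = 0)
    (heq : (a.1 - q.1) ^ 2 + (a.2 - q.2) ^ 2 = (b.1 - q.1) ^ 2 + (b.2 - q.2) ^ 2) :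
    q.1 < c'.1 := by
  push_neg at haout
  nlinarith [haout, hbin, heq, sq_nonneg (a.1 - b.1)]
end

section
/- Let P be a finite set of points on the real line and S a finite set of closed intervals, each with positive weight, such that the union of S covers P. Sort P as p_1 < p_2 < … < p_n. Define W(0) = 0 and for 1 ≤ i ≤ n, W(i) = min over intervals s_j ∈ S containing p_i of (w_j + W(f(j))), where f(j) is the largest index i' with p_{i'} strictly less than the left endpoint of s_j (f(j) = 0 if none). Then W(n) equals the minimum total weight of a subset of S covering all of P. -/
/-- Correctness of the 1D dynamic programming recurrence: with points
`p_1 < ⋯ < p_n` on the line, weighted closed intervals `[l_j, r_j]` with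
positive weights whose union covers the points, `f j` the largest index `i'`
with `p_{i'} < l_j` (and `f j = 0` if none), `W 0 = 0`, and
`W i = min { w_j + W (f j) : l_j ≤ p_i ≤ r_j }`, the value `W n` equals the
minimum total weight of a subset of the intervals covering all of the points. -/
theorem dp_correctness (n m : ℕ) (p : ℕ → ℝ) (l r w : Fin m → ℝ)
    (hmono : ∀ i j : ℕ, 1 ≤ i → i < j → j ≤ n → p i < p j)
    (hw : ∀ j : Fin m, 0 < w j)
    (hcover : ∀ i : ℕ, 1 ≤ i → i ≤ n → ∃ j : Fin m, l j ≤ p i ∧ p i ≤ r j)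
    (f : Fin m → ℕ)
    (hf : ∀ j : Fin m, f j ≤ n ∧
      (∀ i : ℕ, 1 ≤ i → i ≤ n → p i < l j → i ≤ f j) ∧
      (f j = 0 ∨ (1 ≤ f j ∧ p (f j) < l j)))
    (W : ℕ → ℝ) (hW0 : W 0 = 0)
    (hWrec : ∀ i : ℕ, 1 ≤ i → i ≤ n →
      IsLeast {v : ℝ | ∃ j : Fin m, l j ≤ p i ∧ p i ≤ r j ∧ v = w j + W (f j)}
        (W i)) :
    IsLeast {v : ℝ | ∃ S' : Finset (Fin m),
        (∀ i : ℕ, 1 ≤ i → i ≤ n → ∃ j ∈ S', l j ≤ p i ∧ p i ≤ r j) ∧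
        v = ∑ j ∈ S', w j} (W n) := by
  have key : ∀ i : ℕ, i ≤ n →
      IsLeast {v : ℝ | ∃ S' : Finset (Fin m),
        (∀ i' : ℕ, 1 ≤ i' → i' ≤ i → ∃ j ∈ S', l j ≤ p i' ∧ p i' ≤ r j) ∧
        v = ∑ j ∈ S', w j} (W i) := by
    intro i
    induction i using Nat.strong_induction_on with
    | _ i IH =>
      intro hin
      rcases Nat.eq_zero_or_pos i with h0 | h1
      · subst h0
        constructor
        · exact ⟨∅, fun i' h1 h0 => absurd (h1.trans h0) (by norm_num), by simp [hW0]⟩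
        · rintro v ⟨S', -, rfl⟩
          rw [hW0]
          exact Finset.sum_nonneg fun j _ => (hw j).le
      · obtain ⟨hmem, hlb⟩ := hWrec i h1 hin
        -- basic fact: any interval j containing p i has f j < i
        have hflt : ∀ j : Fin m, l j ≤ p i → f j < i := by
          intro j hl
          obtain ⟨hfn, hfall, hfcase⟩ := hf j
          by_contra hcon
          push_neg at hcon
          rcases hfcase with h0 | ⟨hf1, hfl⟩
          · omega
          · rcases eq_or_lt_of_le hcon with heq | hlt
            · rw [← heq] at hfl; linarith
            · have := hmono i (f j) h1 hlt hfn
              linarith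
        -- lower bound
        have lb : ∀ v ∈ {v : ℝ | ∃ S' : Finset (Fin m),
            (∀ i' : ℕ, 1 ≤ i' → i' ≤ i → ∃ j ∈ S', l j ≤ p i' ∧ p i' ≤ r j) ∧
            v = ∑ j ∈ S', w j}, W i ≤ v := by
          rintro v ⟨T, hT, rfl⟩
          obtain ⟨j, hjT, hl, hr⟩ := hT i h1 le_rfl
          have hfj : f j < i := hflt j hl
          obtain ⟨hfn, hfall, hfcase⟩ := hf j
          have hWle : W i ≤ w j + W (f j) := hlb ⟨j, hl, hr, rfl⟩
          have hcovE : ∀ i' : ℕ, 1 ≤ i' → i' ≤ f j →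
              ∃ j' ∈ T.erase j, l j' ≤ p i' ∧ p i' ≤ r j' := by
            intro i' h1' hle'
            have hf1 : 1 ≤ f j := le_trans h1' hle'
            have hfl : p (f j) < l j := by
              rcases hfcase with h0 | ⟨_, hfl⟩
              · omega
              · exact hfl
            have hpi' : p i' < l j := by
              rcases eq_or_lt_of_le hle' with heq | hlt
              · rw [heq]; exact hfl
              · exact lt_trans (hmono i' (f j) h1' hlt hfn) hfl
            obtain ⟨j', hj'T, hl', hr'⟩ := hT i' h1' (le_trans hle' (le_of_lt hfj))
            refine ⟨j', Finset.mem_erase.mpr ⟨?_, hj'T⟩, hl', hr'⟩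
            rintro rfl
            linarith
          have hsum : ∑ j' ∈ T, w j' = w j + ∑ j' ∈ T.erase j, w j' :=
            (Finset.add_sum_erase T w hjT).symm
          have hrec : W (f j) ≤ ∑ j' ∈ T.erase j, w j' :=
            (IH (f j) hfj (le_trans (le_of_lt hfj) hin)).2 ⟨T.erase j, hcovE, rfl⟩
          linarith
        refine ⟨?_, lb⟩
        -- membership
        obtain ⟨j, hl, hr, hWi⟩ := hmem
        have hfj : f j < i := hflt j hl
        obtain ⟨hfn, hfall, hfcase⟩ := hf j
        obtain ⟨⟨S'', hScov, hSsum⟩, -⟩ := IH (f j) hfj (le_trans (le_of_lt hfj) hin)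
        have hcovI : ∀ i' : ℕ, 1 ≤ i' → i' ≤ i →
            ∃ j' ∈ insert j S'', l j' ≤ p i' ∧ p i' ≤ r j' := by
          intro i' h1' hle'
          rcases le_or_gt i' (f j) with hle'' | hlt''
          · obtain ⟨j', hj', hls, hrs⟩ := hScov i' h1' hle''
            exact ⟨j', Finset.mem_insert_of_mem hj', hls, hrs⟩
          · have hli' : l j ≤ p i' := by
              by_contra hcon
              push_neg at hcon
              have := hfall i' h1' (le_trans hle' hin) hcon
              omega
            have hri' : p i' ≤ r j := by
              rcases eq_or_lt_of_le hle' with heq | hlt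
              · rw [heq]; exact hr
              · exact le_trans (le_of_lt (hmono i' i h1' hlt hin)) hr
            exact ⟨j, Finset.mem_insert_self j S'', hli', hri'⟩
        have hjS : j ∉ S'' := by
          intro hjin
          have : W i ≤ ∑ j' ∈ S'', w j' := by
            apply lb
            refine ⟨S'', ?_, rfl⟩
            intro i' h1' hle'
            obtain ⟨j', hj', h⟩ := hcovI i' h1' hle'
            rcases Finset.mem_insert.mp hj' with rfl | hmem'
            · exact ⟨j', hjin, h⟩
            · exact ⟨j', hmem', h⟩
          rw [← hSsum] at this
          have := hw j
          linarith
        refine ⟨insert j S'', hcovI, ?_⟩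
        rw [Finset.sum_insert hjS, ← hSsum, hWi]
  exact key n le_rfl
end

section
/- Let P = {p_1,…,p_n} be points above the x-axis with strictly increasing x-coordinates, and let s, s' be two closed disks centered on the x-axis. Suppose [a,b] and [a',b'] are index pairs with a < a' < b < b' such that: p_{a}, p_{b} ∉ s and p_k ∈ s for all a < k < b; p_{a'}, p_{b'} ∉ s' and p_k ∈ s' for all a' < k < b'. Then there is at most one such conflicting pair of index intervals determined by s and s' (formally: there do not exist two distinct pairs of index intervals, one from s and one from s', each pair conflicting in the above sense). -/
/-- Combinatorial core: if two bounding intervals of `S` conflict (type 1) with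
two bounding intervals of `S'`, and there is no "reversed" pair (a point in
`S' \ S` strictly before a point in `S \ S'`), then the two conflicting pairs
coincide. -/
lemma aux_conflict (n a b a' b' e d e' d' : ℕ) (S S' : ℕ → Prop)
    (h1 : 1 ≤ a ∧ a < b ∧ b ≤ n ∧ ¬ S a ∧ ¬ S b ∧ ∀ k, a < k → k < b → S k)
    (h2 : 1 ≤ a' ∧ a' < b' ∧ b' ≤ n ∧ ¬ S' a' ∧ ¬ S' b' ∧ ∀ k, a' < k → k < b' → S' k)
    (h3 : 1 ≤ e ∧ e < d ∧ d ≤ n ∧ ¬ S e ∧ ¬ S d ∧ ∀ k, e < k → k < d → S k)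
    (h4 : 1 ≤ e' ∧ e' < d' ∧ d' ≤ n ∧ ¬ S' e' ∧ ¬ S' d' ∧ ∀ k, e' < k → k < d' → S' k)
    (c1 : a < a' ∧ a' < b ∧ b < b')
    (c2 : e < e' ∧ e' < d ∧ d < d')
    (hrev : ∀ i j, 1 ≤ i → i < j → j ≤ n → S' i → ¬ S i → S j → ¬ S' j → False) :
    a = e ∧ b = d ∧ a' = e' ∧ b' = d' := by
  obtain ⟨ha1, hab, hbn, hSa, hSb, hS⟩ := h1
  obtain ⟨ha1', hab', hbn', hSa', hSb', hS'⟩ := h2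
  obtain ⟨he1, hed, hdn, hSe, hSd, hT⟩ := h3
  obtain ⟨he1', hed', hdn', hSe', hSd', hT'⟩ := h4
  obtain ⟨c11, c12, c13⟩ := c1
  obtain ⟨c21, c22, c23⟩ := c2
  have hae : a = e := by
    rcases lt_trichotomy a e with h | h | h
    · -- a < e, so b ≤ e, so b < e'
      have hbe : b ≤ e := by
        by_contra hbe
        push_neg at hbe
        exact hSe (hS e h hbe)
      exact absurd (hrev b e' (by omega) (by omega) (by omega)
        (hS' b c12 c13) hSb (hT e' c21 c22) hSe') (fun h => h)
    · exact h
    · -- e < a, so d ≤ a, so d < a'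
      have hda : d ≤ a := by
        by_contra hda
        push_neg at hda
        exact hSa (hT a h hda)
      exact absurd (hrev d a' (by omega) (by omega) (by omega)
        (hT' d c22 c23) hSd (hS a' c11 c12) hSa') (fun h => h)
  have hbd : b = d := by
    rcases lt_trichotomy b d with h | h | h
    · exact absurd (hT b (by omega) h) hSb
    · exact h
    · exact absurd (hS d (by omega) h) hSd
  have hae' : a' = e' := by
    rcases lt_trichotomy a' e' with h | h | h
    · have : b' ≤ e' := by
        by_contra hb
        push_neg at hb
        exact hSe' (hS' e' h hb)
      omega
    · exact h
    · have : d' ≤ a' := by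
        by_contra hb
        push_neg at hb
        exact hSa' (hT' a' h hb)
      omega
  have hbd' : b' = d' := by
    rcases lt_trichotomy b' d' with h | h | h
    · exact absurd (hT' b' (by omega) h) hSb'
    · exact h
    · exact absurd (hS' d' (by omega) h) hSd'
  exact ⟨hae, hbd, hae', hbd'⟩

/-- For two closed disks `s`, `s'` centered on the x-axis and points
`p_1, …, p_n` above the axis with strictly increasing x-coordinates, there is at
most one pair of conflicting bounding intervals defined by the two disks: if
`[a,b]` (of `s`) conflicts with `[a',b']` (of `s'`) and `[e,d]` (of `s`)
conflicts with `[e',d']` (of `s'`), then the two pairs coincide. A bounding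
interval `[a,b]` of `s` satisfies `p_a ∉ s`, `p_b ∉ s`, and `p_k ∈ s` for all
`a < k < b`; intervals `[a,b]`, `[a',b']` conflict if `a < a' < b < b'` or
`a' < a < b' < b`. -/
theorem at_most_one_conflicting_pair (n : ℕ) (p : ℕ → ℝ × ℝ)
    (c c' : ℝ × ℝ) (r r' : ℝ) (hc : c.2 = 0) (hc' : c'.2 = 0)
    (hr : 0 ≤ r) (hr' : 0 ≤ r')
    (hmono : ∀ k l : ℕ, 1 ≤ k → k < l → l ≤ n → (p k).1 < (p l).1)
    (hy : ∀ k : ℕ, 1 ≤ k → k ≤ n → 0 ≤ (p k).2)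
    (inS inS' : ℕ → Prop)
    (hinS : ∀ k : ℕ, inS k ↔ ((p k).1 - c.1) ^ 2 + ((p k).2 - c.2) ^ 2 ≤ r ^ 2)
    (hinS' : ∀ k : ℕ, inS' k ↔ ((p k).1 - c'.1) ^ 2 + ((p k).2 - c'.2) ^ 2 ≤ r' ^ 2)
    (BI BI' : ℕ → ℕ → Prop)
    (hBI : ∀ a b : ℕ, BI a b ↔
      1 ≤ a ∧ a < b ∧ b ≤ n ∧ ¬ inS a ∧ ¬ inS b ∧ ∀ k, a < k → k < b → inS k)
    (hBI' : ∀ a b : ℕ, BI' a b ↔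
      1 ≤ a ∧ a < b ∧ b ≤ n ∧ ¬ inS' a ∧ ¬ inS' b ∧ ∀ k, a < k → k < b → inS' k)
    (Conf : ℕ × ℕ → ℕ × ℕ → Prop)
    (hConf : ∀ a b a' b' : ℕ, Conf (a, b) (a', b') ↔
      (a < a' ∧ a' < b ∧ b < b') ∨ (a' < a ∧ a < b' ∧ b' < b))
    (a b a' b' e d e' d' : ℕ)
    (h1 : BI a b) (h2 : BI' a' b') (h12 : Conf (a, b) (a', b'))
    (h3 : BI e d) (h4 : BI' e' d') (h34 : Conf (e, d) (e', d')) :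
    a = e ∧ b = d ∧ a' = e' ∧ b' = d' := by
  rw [hBI] at h1 h3
  rw [hBI'] at h2 h4
  rw [hConf] at h12 h34
  -- geometric key facts
  have hlt : ∀ k, inS k → ¬ inS' k →
      (c'.1 - c.1) * (2 * (p k).1 - (c.1 + c'.1)) < r ^ 2 - r' ^ 2 := by
    intro k hk hk'
    rw [hinS] at hk
    rw [hinS'] at hk'
    push_neg at hk'
    rw [hc] at hk
    rw [hc'] at hk'
    have hid : (c'.1 - c.1) * (2 * (p k).1 - (c.1 + c'.1))
        = ((p k).1 - c.1) ^ 2 - ((p k).1 - c'.1) ^ 2 := by ring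
    linarith
  have hgt : ∀ k, inS' k → ¬ inS k →
      r ^ 2 - r' ^ 2 < (c'.1 - c.1) * (2 * (p k).1 - (c.1 + c'.1)) := by
    intro k hk hk'
    rw [hinS'] at hk
    rw [hinS] at hk'
    push_neg at hk'
    rw [hc'] at hk
    rw [hc] at hk'
    have hid : (c'.1 - c.1) * (2 * (p k).1 - (c.1 + c'.1))
        = ((p k).1 - c.1) ^ 2 - ((p k).1 - c'.1) ^ 2 := by ring
    linarith
  have hsign : ∀ i j, 1 ≤ i → i < j → j ≤ n → inS i → ¬ inS' i → inS' j → ¬ inS j →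
      0 < c'.1 - c.1 := by
    intro i j hi hij hj hSi hSi' hSj' hSj
    have g1 := hlt i hSi hSi'
    have g2 := hgt j hSj' hSj
    have hx := hmono i j hi hij hj
    nlinarith
  have hsign' : ∀ i j, 1 ≤ i → i < j → j ≤ n → inS' i → ¬ inS i → inS j → ¬ inS' j →
      c'.1 - c.1 < 0 := by
    intro i j hi hij hj hSi' hSi hSj hSj'
    have g1 := hgt i hSi' hSi
    have g2 := hlt j hSj hSj'
    have hx := hmono i j hi hij hj
    nlinarith
  rcases h12 with c1 | c1 <;> rcases h34 with c2 | c2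
  · -- both type 1
    exact aux_conflict n a b a' b' e d e' d' inS inS' h1 h2 h3 h4 c1 c2
      (fun i j hi hij hj hi1 hi2 hj1 hj2 =>
        absurd (hsign' i j hi hij hj hi1 hi2 hj1 hj2)
          (not_lt.mpr (le_of_lt (hsign a' b (by omega) c1.2.1 (by omega)
            (h1.2.2.2.2.2 a' c1.1 c1.2.1) h2.2.2.2.1
            (h2.2.2.2.2.2 b c1.2.1 c1.2.2) h1.2.2.2.2.1))))
  · -- type 1 then type 2 : contradiction
    have hD : 0 < c'.1 - c.1 :=
      hsign a' b (by omega) c1.2.1 (by omega)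
        (h1.2.2.2.2.2 a' c1.1 c1.2.1) h2.2.2.2.1
        (h2.2.2.2.2.2 b c1.2.1 c1.2.2) h1.2.2.2.2.1
    have hD' : c'.1 - c.1 < 0 :=
      hsign' e d' (by omega) c2.2.1 (by omega)
        (h4.2.2.2.2.2 e c2.1 c2.2.1) h3.2.2.2.1
        (h3.2.2.2.2.2 d' c2.2.1 c2.2.2) h4.2.2.2.2.1
    linarith
  · -- type 2 then type 1 : contradiction
    have hD : 0 < c'.1 - c.1 :=
      hsign e' d (by omega) c2.2.1 (by omega)
        (h3.2.2.2.2.2 e' c2.1 c2.2.1) h4.2.2.2.1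
        (h4.2.2.2.2.2 d c2.2.1 c2.2.2) h3.2.2.2.2.1
    have hD' : c'.1 - c.1 < 0 :=
      hsign' a b' (by omega) c1.2.1 (by omega)
        (h2.2.2.2.2.2 a c1.1 c1.2.1) h1.2.2.2.1
        (h1.2.2.2.2.2 b' c1.2.1 c1.2.2) h2.2.2.2.2.1
    linarith
  · -- both type 2: swap roles of S and S'
    have main := aux_conflict n a' b' a b e' d' e d inS' inS h2 h1 h4 h3 c1 c2
      (fun i j hi hij hj hi1 hi2 hj1 hj2 =>
        absurd (hsign i j hi hij hj hi1 hi2 hj1 hj2)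
          (not_lt.mpr (le_of_lt (hsign' a b' (by omega) c1.2.1 (by omega)
            (h2.2.2.2.2.2 a c1.1 c1.2.1) h1.2.2.2.1
            (h1.2.2.2.2.2 b' c1.2.1 c1.2.2) h2.2.2.2.2.1))))
    exact ⟨main.2.2.1, main.2.2.2, main.1, main.2.1⟩
end

section
/- Let P = {p_1,…,p_n} be points above the x-axis with strictly increasing x-coordinates, and let s, s' be closed disks centered on the x-axis. If a bounding interval [a,b] of s conflicts with a bounding interval [a',b'] of s' (say a < a' < b < b'), then s ∩ s' ≠ ∅. -/
/-- If a middle bounding interval `[a,b]` defined by a disk `s` conflicts with a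
middle bounding interval `[a',b']` defined by a disk `s'` (say `a < a' < b < b'`),
where the endpoint points are vertically above the respective disks (outside
the disk but within its x-extent) and the interior points are inside, then the
two disks intersect. Disks are closed Euclidean disks centered on the x-axis
and all points lie on or above the axis. -/
theorem conflicting_intervals_imply_intersection (n : ℕ) (p : ℕ → ℝ × ℝ)
    (c c' : ℝ × ℝ) (r r' : ℝ) (hc : c.2 = 0) (hc' : c'.2 = 0)
    (hr : 0 ≤ r) (hr' : 0 ≤ r')
    (hmono : ∀ k l : ℕ, 1 ≤ k → k < l → l ≤ n → (p k).1 < (p l).1)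
    (hy : ∀ k : ℕ, 1 ≤ k → k ≤ n → 0 ≤ (p k).2)
    (a b a' b' : ℕ) (ha : 1 ≤ a) (hb' : b' ≤ n)
    (hconf : a < a' ∧ a' < b ∧ b < b')
    -- [a,b] is a middle bounding interval of s:
    (haout : ¬ (((p a).1 - c.1) ^ 2 + ((p a).2 - c.2) ^ 2 ≤ r ^ 2))
    (hbout : ¬ (((p b).1 - c.1) ^ 2 + ((p b).2 - c.2) ^ 2 ≤ r ^ 2))
    (hava : c.1 - r ≤ (p a).1 ∧ (p a).1 ≤ c.1 + r)
    (havb : c.1 - r ≤ (p b).1 ∧ (p b).1 ≤ c.1 + r)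
    (hin : ∀ k, a < k → k < b → ((p k).1 - c.1) ^ 2 + ((p k).2 - c.2) ^ 2 ≤ r ^ 2)
    -- [a',b'] is a middle bounding interval of s':
    (ha'out : ¬ (((p a').1 - c'.1) ^ 2 + ((p a').2 - c'.2) ^ 2 ≤ r' ^ 2))
    (hb'out : ¬ (((p b').1 - c'.1) ^ 2 + ((p b').2 - c'.2) ^ 2 ≤ r' ^ 2))
    (hava' : c'.1 - r' ≤ (p a').1 ∧ (p a').1 ≤ c'.1 + r')
    (havb' : c'.1 - r' ≤ (p b').1 ∧ (p b').1 ≤ c'.1 + r')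
    (hin' : ∀ k, a' < k → k < b' →
      ((p k).1 - c'.1) ^ 2 + ((p k).2 - c'.2) ^ 2 ≤ r' ^ 2) :
    ({z : ℝ × ℝ | (z.1 - c.1) ^ 2 + (z.2 - c.2) ^ 2 ≤ r ^ 2} ∩
      {z : ℝ × ℝ | (z.1 - c'.1) ^ 2 + (z.2 - c'.2) ^ 2 ≤ r' ^ 2}).Nonempty := by
  obtain ⟨h1, h2, h3⟩ := hconf
  have hmem : ((p a').1 - c.1) ^ 2 + ((p a').2 - c.2) ^ 2 ≤ r ^ 2 := hin a' h1 h2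
  refine ⟨((p a').1, 0), ?_, ?_⟩
  · simp only [Set.mem_setOf_eq]
    nlinarith [sq_nonneg ((p a').2 - c.2), hc]
  · simp only [Set.mem_setOf_eq]
    nlinarith [hava'.1, hava'.2, hc']
end

section
/- Let P = {p_1,…,p_n} be points in the plane with strictly increasing x-coordinates and let s_k be a closed axis-parallel square centered on the x-axis. For a point p_j, among all points p_i with i < j that are to the northwest of p_j (x(p_i) < x(p_j) and y(p_i) > y(p_j)), at most one point p_i forms a 'middle bounding couple' (i,j) with p_j with respect to the squares of S, where (i,j) is a middle bounding couple of a square s if both p_i and p_j are vertically above s (outside s, with x-coordinates between those of the leftmost and rightmost points of s's upper edge), all points p_k with i < k < j are inside s, and neither i nor j is an extreme index for s. -/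
/-- In the L∞ case, for each point `p_j`, among all points of `P` to the
northwest of `p_j` there is at most one point that can form a middle bounding
couple with `p_j`: if `(i,j)` is a middle bounding couple of a square `(c,r)`
and `(i',j)` is a middle bounding couple of a square `(c',r')` (both squares
centered on the x-axis), with `p_i` and `p_{i'}` northwest of `p_j`, then
`i = i'`. A point `z` is vertically above a square iff `z` is outside the
square and `c - r ≤ x(z) ≤ c + r`; a middle bounding couple `(i,j)` of a square
has `p_i`, `p_j` vertically above it and all `p_k`, `i < k < j`, inside it. -/
theorem at_most_one_northwest_couple (n : ℕ) (p : ℕ → ℝ × ℝ)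
    (hmono : ∀ k l : ℕ, 1 ≤ k → k < l → l ≤ n → (p k).1 < (p l).1)
    (hy : ∀ k : ℕ, 1 ≤ k → k ≤ n → 0 ≤ (p k).2)
    (j i i' : ℕ) (hi1 : 1 ≤ i) (hij : i < j) (hi'1 : 1 ≤ i') (hi'j : i' < j)
    (hjn : j ≤ n)
    (hNW : (p i).1 < (p j).1 ∧ (p j).2 < (p i).2)
    (hNW' : (p i').1 < (p j).1 ∧ (p j).2 < (p i').2)
    (c c' : ℝ × ℝ) (r r' : ℝ) (hc : c.2 = 0) (hc' : c'.2 = 0)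
    (hr : 0 ≤ r) (hr' : 0 ≤ r')
    -- (i, j) is a middle bounding couple of the square (c, r):
    (hiout : ¬ (max |(p i).1 - c.1| |(p i).2 - c.2| ≤ r))
    (hix : c.1 - r ≤ (p i).1 ∧ (p i).1 ≤ c.1 + r)
    (hjout : ¬ (max |(p j).1 - c.1| |(p j).2 - c.2| ≤ r))
    (hjx : c.1 - r ≤ (p j).1 ∧ (p j).1 ≤ c.1 + r)
    (hin : ∀ k, i < k → k < j → max |(p k).1 - c.1| |(p k).2 - c.2| ≤ r)
    -- (i', j) is a middle bounding couple of the square (c', r'):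
    (hi'out : ¬ (max |(p i').1 - c'.1| |(p i').2 - c'.2| ≤ r'))
    (hi'x : c'.1 - r' ≤ (p i').1 ∧ (p i').1 ≤ c'.1 + r')
    (hj'out : ¬ (max |(p j).1 - c'.1| |(p j).2 - c'.2| ≤ r'))
    (hj'x : c'.1 - r' ≤ (p j).1 ∧ (p j).1 ≤ c'.1 + r')
    (hin' : ∀ k, i' < k → k < j → max |(p k).1 - c'.1| |(p k).2 - c'.2| ≤ r') :
    i = i' := by
  rcases lt_trichotomy i i' with h | h | h
  · -- p_{i'} is inside (c, r), so y_{i'} ≤ r; but y_j > r and y_j < y_{i'}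
    exfalso
    have hyj : 0 ≤ (p j).2 := hy j (le_trans hi1 (le_of_lt hij)) hjn
    have hxj : |(p j).1 - c.1| ≤ r := abs_sub_le_iff.2 ⟨by linarith [hjx.2], by linarith [hjx.1]⟩
    have hyj' : r < (p j).2 := by
      by_contra hcon
      push_neg at hcon
      exact hjout (max_le hxj (by rw [hc, sub_zero, abs_of_nonneg hyj]; exact hcon))
    have hin2 := hin i' h hi'j
    have : |(p i').2 - c.2| ≤ r := le_trans (le_max_right _ _) hin2
    rw [hc] at this
    have hyi' : 0 ≤ (p i').2 := hy i' hi'1 (le_trans (le_of_lt hi'j) hjn)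
    rw [sub_zero, abs_of_nonneg hyi'] at this
    linarith [hNW'.2]
  · exact h
  · exfalso
    have hyj : 0 ≤ (p j).2 := hy j (le_trans hi1 (le_of_lt hij)) hjn
    have hxj : |(p j).1 - c'.1| ≤ r' :=
      abs_sub_le_iff.2 ⟨by linarith [hj'x.2], by linarith [hj'x.1]⟩
    have hyj' : r' < (p j).2 := by
      by_contra hcon
      push_neg at hcon
      exact hj'out (max_le hxj (by rw [hc', sub_zero, abs_of_nonneg hyj]; exact hcon))
    have hin2 := hin' i h hij
    have : |(p i).2 - c'.2| ≤ r' := le_trans (le_max_right _ _) hin2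
    rw [hc'] at this
    have hyi : 0 ≤ (p i).2 := hy i hi1 (le_trans (le_of_lt hij) hjn)
    rw [sub_zero, abs_of_nonneg hyi] at this
    linarith [hNW.2]
end

section
/- Let s_i and s_j be closed disks of equal radius centered on the x-axis, and let c_i be the center of s_i. Let p be a point with y(p) ≥ 0, p ∉ s_i, p ∈ s_j and x(p) ≤ x(c_i). Then every point q with y(q) ≥ 0, q ∈ s_i and x(q) ≤ x(p) satisfies q ∈ s_j. -/
/-- Left-side symmetric version of the unit-disk domination lemma: for two
equal-radius closed disks centered on the x-axis, if a point `p` on or above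
the axis is outside `s_i`, inside `s_j`, and `x(p) ≤ x(c_i)`, then every point
`q` on or above the axis inside `s_i` with `x(q) ≤ x(p)` is also inside `s_j`. -/
theorem unit_disk_domination_left (r : ℝ) (hr : 0 ≤ r) (ci cj p q : ℝ × ℝ)
    (hci : ci.2 = 0) (hcj : cj.2 = 0)
    (hpy : 0 ≤ p.2)
    (hpi : ¬ ((p.1 - ci.1) ^ 2 + (p.2 - ci.2) ^ 2 ≤ r ^ 2))
    (hpj : (p.1 - cj.1) ^ 2 + (p.2 - cj.2) ^ 2 ≤ r ^ 2)
    (hx : p.1 ≤ ci.1)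
    (hqy : 0 ≤ q.2)
    (hqi : (q.1 - ci.1) ^ 2 + (q.2 - ci.2) ^ 2 ≤ r ^ 2)
    (hqx : q.1 ≤ p.1) :
    (q.1 - cj.1) ^ 2 + (q.2 - cj.2) ^ 2 ≤ r ^ 2 := by
  push_neg at hpi
  rw [hci] at hpi hqi
  rw [hcj] at hpj ⊢
  simp only [sub_zero] at hpi hpj hqi ⊢
  have hcji : cj.1 ≤ ci.1 := by nlinarith [sq_nonneg (p.2)]
  rcases le_or_gt cj.1 q.1 with h | h
  · nlinarith
  · nlinarith
end
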